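/- (Hamming-type bound for (possibly degenerate) stabilizer codes.) Let C ⊆ GF(4)^n be an additive code of type 4^{k_0}2^{k_1} with coordinates arranged in standard form, with C ⊆ C⊥ (trace-Hermitian dual) and C ≠ C⊥. Let d be the minimum Hamming weight of the codewords in C⊥ \ C, and set e = ⌊(d−1)/2⌋. Then Σ_{i=0}^{e} Σ_{j=0}^{i} C(k_1, j) · 3^{i−j} · C(n−k_0−k_1, i−j) ≤ 2^{2k_0+3k_1} (= 4^{(n−k)/2 + k_1}, where k = n − 2k_0 − k_1). -/

import Mathlib

open Finset

/-- The field `GF(4)`. -/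
abbrev F4 := GaloisField 2 2

/-- The Hamming weight of a vector: the number of nonzero coordinates. -/
noncomputable def hWt {ι : Type} [Fintype ι] {F : Type} [Zero F] (v : ι → F) : ℕ :=
  Nat.card {i : ι // v i ≠ 0}

/-- The trace-Hermitian inner product on `GF(4)^n`:
`u*v = ∑ᵢ (uᵢ vᵢ² + uᵢ² vᵢ)`. -/
noncomputable def trInner {ι : Type} [Fintype ι] (u v : ι → F4) : F4 :=
  ∑ i, (u i * (v i) ^ 2 + (u i) ^ 2 * v i)

/-- The dual of a set of vectors in `GF(4)^n` with respect to the trace-Hermitian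
inner product. -/
noncomputable def trDual {ι : Type} [Fintype ι] (C : Set (ι → F4)) : Set (ι → F4) :=
  {v | ∀ u ∈ C, trInner v u = 0}

/-- The rows of the standard-form generator matrix
`[[I_{k₀}, ωA₁, B₁], [ωI_{k₀}, ωA₂, B₂], [0, I_{k₁}, A₃]]` of an additive code of
type `4^{k₀}2^{k₁}` and length `n = k₀ + k₁ + m`, with column blocks of sizes
`k₀, k₁, m`. -/
noncomputable def stdRow (k0 k1 m : ℕ) (ω : F4)
    (A1 A2 : Matrix (Fin k0) (Fin k1) F4) (A3 : Matrix (Fin k1) (Fin m) F4)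
    (B1 B2 : Matrix (Fin k0) (Fin m) F4) :
    (Fin k0 ⊕ Fin k0 ⊕ Fin k1) → (Fin k0 ⊕ Fin k1 ⊕ Fin m) → F4
  | Sum.inl i =>
      Sum.elim (fun j => if j = i then 1 else 0)
        (Sum.elim (fun j => ω * A1 i j) (fun j => B1 i j))
  | Sum.inr (Sum.inl i) =>
      Sum.elim (fun j => if j = i then ω else 0)
        (Sum.elim (fun j => ω * A2 i j) (fun j => B2 i j))
  | Sum.inr (Sum.inr i) =>
      Sum.elim (fun _ => 0)
        (Sum.elim (fun j => if j = i then 1 else 0) (fun j => A3 i j))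


/-! ### Auxiliary facts about `GF(4)` -/

lemma F4_card : Nat.card F4 = 4 := by
  have := GaloisField.card 2 2 (by norm_num)
  simpa using this

lemma F4_pow4 (x : F4) : x ^ 4 = x := by
  letI : Fintype F4 := Fintype.ofFinite F4
  have h4 : Fintype.card F4 = 4 := by rw [← Nat.card_eq_fintype_card]; exact F4_card
  have := FiniteField.pow_card x
  rwa [h4] at this

lemma F4_idem {x : F4} (h : x ^ 2 = x) : x = 0 ∨ x = 1 := by
  have : x * (x - 1) = 0 := by linear_combination h
  rcases mul_eq_zero.mp this with h0 | h1
  · exact Or.inl h0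
  · exact Or.inr (sub_eq_zero.mp h1)

lemma zmod2_cases : ∀ c : ZMod 2, c = 0 ∨ c = 1 := by decide

/-! ### Auxiliary facts about `trInner` -/

lemma trInner_sq {ι : Type} [Fintype ι] (u v : ι → F4) :
    (trInner u v) ^ 2 = trInner u v := by
  have key : ∀ a b : F4, (a * b ^ 2 + a ^ 2 * b) ^ 2 = a * b ^ 2 + a ^ 2 * b := by
    intro a b
    have ha := F4_pow4 a; have hb := F4_pow4 b
    rw [CharTwo.add_sq]
    linear_combination a ^ 2 * hb + b ^ 2 * ha
  have hfr := map_sum (frobenius F4 2) (fun i => u i * v i ^ 2 + u i ^ 2 * v i) Finset.univ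
  simp only [frobenius_def] at hfr
  rw [trInner, hfr]
  exact Finset.sum_congr rfl fun i _ => key _ _

lemma trInner_mem {ι : Type} [Fintype ι] (u v : ι → F4) :
    trInner u v = 0 ∨ trInner u v = 1 := F4_idem (trInner_sq u v)

lemma trInner_add_left {ι : Type} [Fintype ι] (u w v : ι → F4) :
    trInner (u + w) v = trInner u v + trInner w v := by
  simp only [trInner, Pi.add_apply, ← Finset.sum_add_distrib]
  exact Finset.sum_congr rfl fun i _ => by rw [CharTwo.add_sq]; ring

lemma trInner_add_right {ι : Type} [Fintype ι] (v u w : ι → F4) :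
    trInner v (u + w) = trInner v u + trInner v w := by
  simp only [trInner, Pi.add_apply, ← Finset.sum_add_distrib]
  exact Finset.sum_congr rfl fun i _ => by rw [CharTwo.add_sq]; ring

lemma trInner_zero_left {ι : Type} [Fintype ι] (v : ι → F4) : trInner 0 v = 0 := by
  simp [trInner]

lemma trInner_zero_right {ι : Type} [Fintype ι] (v : ι → F4) : trInner v 0 = 0 := by
  simp [trInner]

lemma trInner_smul_left {ι : Type} [Fintype ι] (c : ZMod 2) (u v : ι → F4) :
    trInner (c • u) v = c • trInner u v := by
  rcases zmod2_cases c with rfl | rfl <;> simp [trInner_zero_left]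

lemma trInner_smul_right {ι : Type} [Fintype ι] (c : ZMod 2) (u v : ι → F4) :
    trInner v (c • u) = c • trInner v u := by
  rcases zmod2_cases c with rfl | rfl <;> simp [trInner_zero_right]

/-! ### Auxiliary facts about `hWt` -/

lemma hWt_eq_card {ι : Type} [Fintype ι] {F : Type} [Zero F] [DecidableEq F] (v : ι → F) :
    hWt v = (univ.filter fun i => v i ≠ 0).card := by
  rw [hWt, Nat.card_eq_fintype_card]
  convert Fintype.card_subtype (fun i => v i ≠ 0)

lemma hWt_zero_iff {ι : Type} [Fintype ι] {F : Type} [Zero F] (v : ι → F) :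
    hWt v = 0 ↔ v = 0 := by
  classical
  have : DecidableEq F := Classical.decEq F
  rw [hWt_eq_card, Finset.card_eq_zero]
  constructor
  · intro h
    funext i
    by_contra hi
    simp only [Pi.zero_apply] at hi
    have : i ∈ (univ.filter fun i => v i ≠ 0) := by simp [hi]
    rw [h] at this
    exact absurd this (Finset.notMem_empty i)
  · intro h; subst h; simp

lemma hWt_split {α β : Type} [Fintype α] [Fintype β] {F : Type} [Zero F]
    (v : (α ⊕ β) → F) :
    hWt v = hWt (fun a => v (Sum.inl a)) + hWt (fun b => v (Sum.inr b)) := by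
  rw [hWt, hWt, hWt, Nat.card_congr (Equiv.subtypeSum (p := fun i => v i ≠ 0)),
    Nat.card_sum]

lemma hWt_sub_le {ι : Type} [Fintype ι] {F : Type} [AddGroup F] (u v : ι → F) :
    hWt (u - v) ≤ hWt u + hWt v := by
  classical
  have : DecidableEq F := Classical.decEq F
  rw [hWt_eq_card, hWt_eq_card, hWt_eq_card]
  refine le_trans (Finset.card_le_card ?_) (Finset.card_union_le _ _)
  intro i hi
  simp only [Finset.mem_filter, Finset.mem_union, Finset.mem_univ, true_and,
    Pi.sub_apply] at *
  by_contra hc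
  push_neg at hc
  exact hi (by rw [hc.1, hc.2, sub_zero])

/-! ### The dual as a submodule, and the syndrome map -/

/-- The trace dual of a submodule, as a submodule. -/
noncomputable def dualSub {ι : Type} [Fintype ι] (C : Submodule (ZMod 2) (ι → F4)) :
    Submodule (ZMod 2) (ι → F4) where
  carrier := trDual (C : Set (ι → F4))
  add_mem' := by
    intro a b ha hb u hu
    rw [trInner_add_left, ha u hu, hb u hu, add_zero]
  zero_mem' := fun u _ => trInner_zero_left u
  smul_mem' := by
    intro c a ha
    rcases zmod2_cases c with rfl | rfl
    · intro u hu; rw [zero_smul]; exact trInner_zero_left u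
    · intro u hu; rw [one_smul]; exact ha u hu

lemma mem_dualSub {ι : Type} [Fintype ι] {C : Submodule (ZMod 2) (ι → F4)}
    {v : ι → F4} : v ∈ dualSub C ↔ v ∈ trDual (C : Set (ι → F4)) := Iff.rfl

/-- The syndrome map. -/
noncomputable def synMap {ι ρ : Type} [Fintype ι] (g : ρ → ι → F4) :
    (ι → F4) →ₗ[ZMod 2] (ρ → F4) where
  toFun v r := trInner v (g r)
  map_add' u w := funext fun r => trInner_add_left u w (g r)
  map_smul' c v := funext fun r => by
    simp only [RingHom.id_apply, Pi.smul_apply]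
    exact trInner_smul_left c v (g r)

/-- The right kernel of `trInner v ·`, as a submodule. -/
noncomputable def rKer {ι : Type} [Fintype ι] (v : ι → F4) :
    Submodule (ZMod 2) (ι → F4) where
  carrier := {u | trInner v u = 0}
  add_mem' := by
    intro a b ha hb
    simp only [Set.mem_setOf_eq] at *
    rw [trInner_add_right, ha, hb, add_zero]
  zero_mem' := trInner_zero_right v
  smul_mem' := by
    intro c a ha
    simp only [Set.mem_setOf_eq] at *
    rw [trInner_smul_right]
    rcases zmod2_cases c with rfl | rfl <;> simp [ha]

lemma ker_synMap_le_dualSub {ι ρ : Type} [Fintype ι] (g : ρ → ι → F4)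
    (C : Submodule (ZMod 2) (ι → F4))
    (hC : C = Submodule.span (ZMod 2) (Set.range g)) :
    LinearMap.ker (synMap g) ≤ dualSub C := by
  intro v hv
  have hv' : ∀ r, trInner v (g r) = 0 := fun r => congrFun (LinearMap.mem_ker.mp hv) r
  rw [mem_dualSub]
  intro u hu
  rw [hC] at hu
  have hle : Submodule.span (ZMod 2) (Set.range g) ≤ rKer v := by
    rw [Submodule.span_le]
    rintro _ ⟨r, rfl⟩
    exact hv' r
  exact hle hu

/-- The key cardinality bound: the quotient by the dual code is at most `2 ^ #rows`. -/
lemma card_quot_le {ι ρ : Type} [Fintype ι] [Fintype ρ] (g : ρ → ι → F4)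
    (C : Submodule (ZMod 2) (ι → F4))
    (hC : C = Submodule.span (ZMod 2) (Set.range g)) :
    Nat.card ((ι → F4) ⧸ dualSub C) ≤ 2 ^ (Fintype.card ρ) := by
  classical
  letI : Fintype F4 := Fintype.ofFinite F4
  set L := synMap g with hL
  set D := dualSub C with hD
  have h1 : Nat.card (ι → F4) = Nat.card D * Nat.card ((ι → F4) ⧸ D) :=
    Submodule.card_eq_card_quotient_mul_card D
  have h2 : Nat.card (ι → F4)
      = Nat.card (LinearMap.ker L) * Nat.card ((ι → F4) ⧸ LinearMap.ker L) :=
    Submodule.card_eq_card_quotient_mul_card (LinearMap.ker L)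
  have h3 : Nat.card ((ι → F4) ⧸ LinearMap.ker L) = Nat.card (LinearMap.range L) :=
    Nat.card_congr (LinearMap.quotKerEquivRange L).toEquiv
  have hker := ker_synMap_le_dualSub g C hC
  have hkle : Nat.card (LinearMap.ker L) ≤ Nat.card D :=
    Nat.card_le_card_of_injective (Submodule.inclusion hker)
      (Submodule.inclusion_injective hker)
  have hkpos : 0 < Nat.card (LinearMap.ker L) := Nat.card_pos
  have hQle : Nat.card ((ι → F4) ⧸ D) ≤ Nat.card (LinearMap.range L) := by
    have hchain : Nat.card ((ι → F4) ⧸ D) * Nat.card (LinearMap.ker L)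
        ≤ Nat.card (LinearMap.range L) * Nat.card (LinearMap.ker L) := by
      calc Nat.card ((ι → F4) ⧸ D) * Nat.card (LinearMap.ker L)
          ≤ Nat.card ((ι → F4) ⧸ D) * Nat.card D := Nat.mul_le_mul_left _ hkle
        _ = Nat.card (ι → F4) := by rw [mul_comm]; exact h1.symm
        _ = Nat.card (LinearMap.ker L) * Nat.card ((ι → F4) ⧸ LinearMap.ker L) := h2
        _ = Nat.card (LinearMap.range L) * Nat.card (LinearMap.ker L) := by
            rw [h3, mul_comm]
    exact Nat.le_of_mul_le_mul_right hchain hkpos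
  refine le_trans hQle ?_
  have hval : ∀ f : LinearMap.range L, ∀ r, (f : ρ → F4) r = 0 ∨ (f : ρ → F4) r = 1 := by
    rintro ⟨f, hf⟩ r
    obtain ⟨v, rfl⟩ := hf
    exact trInner_mem v (g r)
  have hinj : Function.Injective
      (fun f : LinearMap.range L => (fun r => if (f : ρ → F4) r = 1 then true else false)) := by
    intro f f' hff
    apply Subtype.ext; funext r
    have h1 := congrFun hff r
    dsimp only at h1
    rcases hval f r with h | h <;> rcases hval f' r with h' | h' <;>
      simp [h, h'] at h1 ⊢
  calc Nat.card (LinearMap.range L) ≤ Nat.card (ρ → Bool) :=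
        Nat.card_le_card_of_injective _ hinj
    _ = 2 ^ (Fintype.card ρ) := by
        rw [Nat.card_eq_fintype_card, Fintype.card_fun, Fintype.card_bool]

/-! ### Counting lemmas -/

section Counting

variable [Fintype F4] [DecidableEq F4]

lemma card_T1 (k1 j : ℕ) (ω : F4) (hω0 : ω ≠ 0) :
    (univ.filter fun a : Fin k1 → F4 => (∀ i, a i = 0 ∨ a i = ω) ∧ hWt a = j).card
      = k1.choose j := by
  have key : (univ.filter fun a : Fin k1 → F4 => (∀ i, a i = 0 ∨ a i = ω) ∧ hWt a = j).card
      = (powersetCard j (univ : Finset (Fin k1))).card := by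
    apply Finset.card_nbij' (fun a => univ.filter fun i => a i ≠ 0)
      (fun s => fun i => if i ∈ s then ω else 0)
    · intro a ha
      simp only [mem_coe, mem_filter, mem_univ, true_and] at ha
      rw [mem_coe, mem_powersetCard]
      exact ⟨subset_univ _, by rw [← hWt_eq_card]; exact ha.2⟩
    · intro s hs
      rw [mem_coe, mem_powersetCard] at hs
      simp only [mem_coe, mem_filter, mem_univ, true_and]
      constructor
      · intro i
        by_cases h : i ∈ s <;> simp [h]
      · rw [hWt_eq_card]
        rw [← hs.2]
        congr 1
        ext i
        by_cases h : i ∈ s <;> simp [h, hω0]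
    · intro a ha
      simp only [mem_coe, mem_filter, mem_univ, true_and] at ha
      funext i
      rcases ha.1 i with h | h <;> simp [h, hω0]
    · intro s hs
      ext i
      by_cases h : i ∈ s <;> simp [h, hω0]
  rw [key, card_powersetCard, card_univ, Fintype.card_fin]

lemma F4_card_ne : Fintype.card {x : F4 // x ≠ 0} = 3 := by
  have h4 : Fintype.card F4 = 4 := by
    rw [← Nat.card_eq_fintype_card]
    have := GaloisField.card 2 2 (by norm_num)
    simpa using this
  have := Fintype.card_subtype_compl (fun x : F4 => x = 0)
  simp only [Fintype.card_subtype_eq] at this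
  rw [this, h4]

lemma card_fiber_supp (m : ℕ) (s : Finset (Fin m)) :
    (univ.filter fun b : Fin m → F4 => univ.filter (fun i => b i ≠ 0) = s).card
      = 3 ^ s.card := by
  have hcard : (univ.filter fun b : Fin m → F4 => univ.filter (fun i => b i ≠ 0) = s).card
      = Fintype.card {b : Fin m → F4 // univ.filter (fun i => b i ≠ 0) = s} :=
    (Fintype.card_subtype _).symm
  rw [hcard]
  have E : {b : Fin m → F4 // univ.filter (fun i => b i ≠ 0) = s}
      ≃ (∀ _ : {i // i ∈ s}, {x : F4 // x ≠ 0}) := by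
    have hmem : ∀ (b : Fin m → F4), (univ.filter (fun i => b i ≠ 0) = s) ↔
        (∀ i, b i ≠ 0 ↔ i ∈ s) := by
      intro b
      rw [Finset.ext_iff]
      constructor
      · intro h i; have := h i; simpa using this
      · intro h i; simpa using h i
    exact
      { toFun := fun b i => ⟨b.1 i.1, ((hmem b.1).mp b.2 i.1).mpr i.2⟩
        invFun := fun f => ⟨fun i => if h : i ∈ s then (f ⟨i, h⟩).1 else 0, by
          rw [hmem]
          intro i
          constructor
          · intro h
            by_contra hs
            simp [hs] at h
          · intro h
            simp only [h, dif_pos]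
            exact (f ⟨i, h⟩).2⟩
        left_inv := by
          rintro ⟨b, hb⟩
          apply Subtype.ext
          funext i
          by_cases h : i ∈ s
          · simp [h]
          · simp only [h, dif_neg, not_false_iff]
            by_contra hne
            exact h (((hmem b).mp hb i).mp (Ne.symm hne))
        right_inv := by
          intro f
          funext i
          apply Subtype.ext
          simp [i.2] }
  rw [Fintype.card_congr E, Fintype.card_pi]
  simp only [F4_card_ne]
  rw [Finset.prod_const]
  congr 1
  rw [card_univ]
  exact Fintype.card_coe s

lemma card_T2 (m t : ℕ) :
    (univ.filter fun b : Fin m → F4 => hWt b = t).card = 3 ^ t * m.choose t := by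
  rw [Finset.card_eq_sum_card_fiberwise
    (f := fun b : Fin m → F4 => univ.filter fun i => b i ≠ 0)
    (t := powersetCard t (univ : Finset (Fin m)))
    (by
      intro b hb
      simp only [mem_coe, mem_filter, mem_univ, true_and] at hb ⊢
      rw [mem_powersetCard]
      exact ⟨subset_univ _, by rw [← hWt_eq_card]; exact hb⟩)]
  have hfib : ∀ s ∈ powersetCard t (univ : Finset (Fin m)),
      ((univ.filter fun b : Fin m → F4 => hWt b = t).filter
        fun b => univ.filter (fun i => b i ≠ 0) = s).card = 3 ^ t := by
    intro s hs
    rw [mem_powersetCard] at hs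
    have : ((univ.filter fun b : Fin m → F4 => hWt b = t).filter
        fun b => univ.filter (fun i => b i ≠ 0) = s)
        = univ.filter fun b : Fin m → F4 => univ.filter (fun i => b i ≠ 0) = s := by
      rw [Finset.filter_filter]
      apply Finset.filter_congr
      intro b _
      constructor
      · exact fun h => h.2
      · intro h
        refine ⟨?_, h⟩
        rw [hWt_eq_card, h, hs.2]
    rw [this, card_fiber_supp]
    rw [hs.2]
  rw [Finset.sum_congr rfl hfib, Finset.sum_const, card_powersetCard, card_univ,
    Fintype.card_fin, smul_eq_mul, mul_comm]

lemma count_aux (k1 m e : ℕ) (ω : F4) (hω0 : ω ≠ 0) :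
    ∑ i ∈ Finset.range (e + 1), ∑ j ∈ Finset.range (i + 1),
        Nat.choose k1 j * 3 ^ (i - j) * Nat.choose m (i - j)
      = (univ.filter fun p : (Fin k1 → F4) × (Fin m → F4) =>
          (∀ i, p.1 i = 0 ∨ p.1 i = ω) ∧ hWt p.1 + hWt p.2 ≤ e).card := by
  rw [Finset.card_eq_sum_card_fiberwise
    (f := fun p : (Fin k1 → F4) × (Fin m → F4) => (hWt p.1, hWt p.2))
    (t := ((Finset.range (e + 1)) ×ˢ (Finset.range (e + 1))).filter
        fun q => q.1 + q.2 ≤ e)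
    (by
      intro p hp
      simp only [mem_coe, mem_filter, mem_univ, true_and] at hp
      simp only [mem_coe, mem_filter, mem_product, mem_range]
      omega)]
  have hfib : ∀ q ∈ ((Finset.range (e + 1)) ×ˢ (Finset.range (e + 1))).filter
      (fun q => q.1 + q.2 ≤ e),
      ((univ.filter fun p : (Fin k1 → F4) × (Fin m → F4) =>
          (∀ i, p.1 i = 0 ∨ p.1 i = ω) ∧ hWt p.1 + hWt p.2 ≤ e).filter
        fun p => (hWt p.1, hWt p.2) = q).card
      = Nat.choose k1 q.1 * (3 ^ q.2 * Nat.choose m q.2) := by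
    rintro ⟨j, t⟩ hq
    simp only [mem_filter, mem_product, mem_range] at hq
    have : ((univ.filter fun p : (Fin k1 → F4) × (Fin m → F4) =>
          (∀ i, p.1 i = 0 ∨ p.1 i = ω) ∧ hWt p.1 + hWt p.2 ≤ e).filter
        fun p => (hWt p.1, hWt p.2) = (j, t))
        = (univ.filter fun a : Fin k1 → F4 => (∀ i, a i = 0 ∨ a i = ω) ∧ hWt a = j)
          ×ˢ (univ.filter fun b : Fin m → F4 => hWt b = t) := by
      ext ⟨a, b⟩
      simp only [Finset.filter_filter, mem_filter, mem_product, mem_univ, true_and,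
        Prod.mk.injEq]
      constructor
      · rintro ⟨⟨h1, _⟩, h2, h3⟩
        exact ⟨⟨h1, h2⟩, h3⟩
      · rintro ⟨⟨h1, h2⟩, h3⟩
        refine ⟨⟨h1, ?_⟩, h2, h3⟩
        rw [h2, h3]
        exact hq.2
    rw [this, Finset.card_product, card_T1 k1 j ω hω0, card_T2 m t]
  rw [Finset.sum_congr rfl hfib]
  rw [Finset.sum_sigma']
  refine Finset.sum_nbij' (i := fun x => (x.2, x.1 - x.2)) (j := fun q => ⟨q.1 + q.2, q.1⟩)
    ?_ ?_ ?_ ?_ ?_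
  · rintro ⟨i, j⟩ h
    simp only [Finset.mem_sigma, mem_range] at h
    simp only [mem_filter, mem_product, mem_range]
    omega
  · rintro ⟨a, b⟩ h
    simp only [mem_filter, mem_product, mem_range] at h
    simp only [Finset.mem_sigma, mem_range]
    omega
  · rintro ⟨i, j⟩ h
    simp only [Finset.mem_sigma, mem_range] at h
    simp only [Sigma.mk.inj_iff, heq_eq_eq]
    exact ⟨by omega, trivial⟩
  · rintro ⟨a, b⟩ h
    simp only [Prod.mk.injEq]
    exact ⟨trivial, by omega⟩
  · rintro ⟨i, j⟩ h
    simp only [Finset.mem_sigma, mem_range] at h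
    rw [mul_assoc]

end Counting

/-! ### Structural lemma for codes in standard form -/

lemma stdRow_struct (k0 k1 m : ℕ) (ω : F4) (hω0 : ω ≠ 0) (hω1 : ω ≠ 1)
    (A1 A2 : Matrix (Fin k0) (Fin k1) F4) (A3 : Matrix (Fin k1) (Fin m) F4)
    (B1 B2 : Matrix (Fin k0) (Fin m) F4)
    (c : (Fin k0 ⊕ Fin k0 ⊕ Fin k1) → ZMod 2)
    (h0 : ∀ i : Fin k0,
      (∑ r, c r • stdRow k0 k1 m ω A1 A2 A3 B1 B2 r) (Sum.inl i) = 0)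
    (h1 : ∀ i : Fin k1,
      (∑ r, c r • stdRow k0 k1 m ω A1 A2 A3 B1 B2 r) (Sum.inr (Sum.inl i)) = 0 ∨
      (∑ r, c r • stdRow k0 k1 m ω A1 A2 A3 B1 B2 r) (Sum.inr (Sum.inl i)) = ω) :
    ∀ r, c r = 0 := by
  classical
  set g := stdRow k0 k1 m ω A1 A2 A3 B1 B2 with hg
  have h2 : (2 : F4) = 0 := CharTwo.two_eq_zero
  have heval : ∀ x, (∑ r, c r • g r) x
      = (∑ a : Fin k0, c (Sum.inl a) • g (Sum.inl a) x)
      + ((∑ a : Fin k0, c (Sum.inr (Sum.inl a)) • g (Sum.inr (Sum.inl a)) x)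
        + (∑ b : Fin k1, c (Sum.inr (Sum.inr b)) • g (Sum.inr (Sum.inr b)) x)) := by
    intro x
    rw [Finset.sum_apply, Fintype.sum_sum_type, Fintype.sum_sum_type]
    simp only [Pi.smul_apply]
  have step1 : ∀ i : Fin k0, c (Sum.inl i) = 0 ∧ c (Sum.inr (Sum.inl i)) = 0 := by
    intro i
    have h := h0 i
    rw [heval] at h
    simp only [hg, stdRow, Sum.elim_inl, smul_ite, smul_zero,
      Finset.sum_ite_eq, Finset.mem_univ, if_true, Finset.sum_const_zero, add_zero] at h
    rcases zmod2_cases (c (Sum.inl i)) with hc1 | hc1 <;>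
      rcases zmod2_cases (c (Sum.inr (Sum.inl i))) with hc2 | hc2 <;>
        rw [hc1, hc2] at h <;> simp only [zero_smul, one_smul, add_zero, zero_add] at h
    · exact ⟨hc1, hc2⟩
    · exact absurd h hω0
    · exact absurd h one_ne_zero
    · exact absurd (by linear_combination h - h2 : ω = 1) hω1
  have step2 : ∀ i : Fin k1, c (Sum.inr (Sum.inr i)) = 0 := by
    intro i
    have h := h1 i
    rw [heval] at h
    simp only [hg, stdRow, Sum.elim_inl, Sum.elim_inr, smul_ite, smul_zero,
      Finset.sum_ite_eq, Finset.mem_univ, if_true, Finset.sum_const_zero,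
      fun a => (step1 a).1, fun a => (step1 a).2, zero_smul, Finset.sum_const_zero,
      zero_add, add_zero] at h
    rcases zmod2_cases (c (Sum.inr (Sum.inr i))) with hc | hc
    · exact hc
    · rw [hc] at h
      simp only [one_smul] at h
      rcases h with h | h
      · exact absurd h one_ne_zero
      · exact absurd h.symm hω1
  rintro (i | i | i)
  · exact (step1 i).1
  · exact (step1 i).2
  · exact step2 i

/-- Hamming-type bound for (possibly degenerate) stabilizer codes: for a self-orthogonal
additive code `C ⊆ C⊥`, `C ≠ C⊥`, of type `4^{k₀}2^{k₁}` in standard form with `d` the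
minimum weight of `C⊥ \ C` and `e = ⌊(d−1)/2⌋`,
`∑_{i=0}^{e} ∑_{j=0}^{i} C(k₁,j) 3^{i−j} C(n−k₀−k₁, i−j) ≤ 2^{2k₀+3k₁}`. -/
theorem stmt13 (k0 k1 m : ℕ) (ω : F4)
    (A1 A2 : Matrix (Fin k0) (Fin k1) F4) (A3 : Matrix (Fin k1) (Fin m) F4)
    (B1 B2 : Matrix (Fin k0) (Fin m) F4)
    (hω : orderOf ω = 3)
    (hB1 : ∀ i j, B1 i j = 0 ∨ B1 i j = 1) (hB2 : ∀ i j, B2 i j = 0 ∨ B2 i j = 1)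
    (hli : LinearIndependent (ZMod 2) (stdRow k0 k1 m ω A1 A2 A3 B1 B2))
    (C : Submodule (ZMod 2) ((Fin k0 ⊕ Fin k1 ⊕ Fin m) → F4))
    (hC : C = Submodule.span (ZMod 2) (Set.range (stdRow k0 k1 m ω A1 A2 A3 B1 B2)))
    (hself : (C : Set ((Fin k0 ⊕ Fin k1 ⊕ Fin m) → F4)) ⊆ trDual (C : Set ((Fin k0 ⊕ Fin k1 ⊕ Fin m) → F4)))
    (hne : (C : Set ((Fin k0 ⊕ Fin k1 ⊕ Fin m) → F4)) ≠ trDual (C : Set ((Fin k0 ⊕ Fin k1 ⊕ Fin m) → F4)))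
    (d : ℕ)
    (hd : IsLeast {w : ℕ | ∃ v ∈ trDual (C : Set ((Fin k0 ⊕ Fin k1 ⊕ Fin m) → F4)), v ∉ C ∧ hWt v = w} d) :
    ∑ i ∈ Finset.range ((d - 1) / 2 + 1), ∑ j ∈ Finset.range (i + 1),
      Nat.choose k1 j * 3 ^ (i - j) * Nat.choose m (i - j) ≤ 2 ^ (2 * k0 + 3 * k1) := by
  classical
  letI : Fintype F4 := Fintype.ofFinite F4
  letI : DecidableEq F4 := Classical.decEq F4
  set g := stdRow k0 k1 m ω A1 A2 A3 B1 B2 with hg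
  have hω0 : ω ≠ 0 := by
    intro h
    have h3 := pow_orderOf_eq_one ω
    rw [hω, h] at h3
    simp at h3
  have hω1 : ω ≠ 1 := by
    intro h
    rw [h, orderOf_one] at hω
    norm_num at hω
  set D := dualSub C with hD
  -- d ≥ 1
  obtain ⟨v0, hv0D, hv0C, hv0w⟩ := hd.1
  have hd1 : 1 ≤ d := by
    by_contra hlt
    push_neg at hlt
    have hd0 : d = 0 := by omega
    rw [hd0] at hv0w
    exact hv0C (by rw [(hWt_zero_iff v0).mp hv0w]; exact C.zero_mem)
  -- the predicate describing the error vectors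
  set P : ((Fin k0 ⊕ Fin k1 ⊕ Fin m) → F4) → Prop := fun v =>
    (∀ i, v (Sum.inl i) = 0) ∧
    (∀ i, v (Sum.inr (Sum.inl i)) = 0 ∨ v (Sum.inr (Sum.inl i)) = ω) ∧
    hWt v ≤ (d - 1) / 2 with hP
  -- weight splitting for vectors vanishing on the first block
  have hsplit0 : ∀ v : (Fin k0 ⊕ Fin k1 ⊕ Fin m) → F4, (∀ i, v (Sum.inl i) = 0) →
      hWt v = hWt (fun i => v (Sum.inr (Sum.inl i)))
        + hWt (fun i => v (Sum.inr (Sum.inr i))) := by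
    intro v h0
    rw [hWt_split v, hWt_split (fun b => v (Sum.inr b))]
    have hz : hWt (fun a : Fin k0 => v (Sum.inl a)) = 0 :=
      (hWt_zero_iff _).mpr (funext fun i => h0 i)
    rw [hz, zero_add]
  -- structural lemma
  have hstruct : ∀ w, w ∈ C → (∀ i, w (Sum.inl i) = 0) →
      (∀ i, w (Sum.inr (Sum.inl i)) = 0 ∨ w (Sum.inr (Sum.inl i)) = ω) → w = 0 := by
    intro w hw hw0 hw1
    rw [hC] at hw
    obtain ⟨c, rfl⟩ := (Submodule.mem_span_range_iff_exists_fun (ZMod 2)).mp hw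
    have hz := stdRow_struct k0 k1 m ω hω0 hω1 A1 A2 A3 B1 B2 c hw0 hw1
    apply Finset.sum_eq_zero
    intro r _
    rw [hz r, zero_smul]
  -- injectivity into the quotient by the dual
  have hinj : Set.InjOn (fun v => Submodule.Quotient.mk (p := D) v)
      ↑(univ.filter P) := by
    intro u hu u' hu' h
    simp only [Finset.coe_filter, Set.mem_setOf_eq, Finset.mem_univ, true_and] at hu hu'
    have hsub : u - u' ∈ D := (Submodule.Quotient.eq D).mp h
    by_cases hCm : u - u' ∈ C
    · have hz := hstruct (u - u') hCm
        (fun i => by rw [Pi.sub_apply, hu.1 i, hu'.1 i, sub_zero])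
        (fun i => by
          rcases hu.2.1 i with h1 | h1 <;> rcases hu'.2.1 i with h2 | h2 <;>
            rw [Pi.sub_apply, h1, h2]
          · left; rw [sub_zero]
          · right; rw [zero_sub, CharTwo.neg_eq]
          · right; rw [sub_zero]
          · left; rw [sub_self])
      exact sub_eq_zero.mp hz
    · exfalso
      have hDw : u - u' ∈ trDual (C : Set ((Fin k0 ⊕ Fin k1 ⊕ Fin m) → F4)) := hsub
      have hge : d ≤ hWt (u - u') := hd.2 ⟨u - u', hDw, hCm, rfl⟩
      have hle := hWt_sub_le u u'
      have e1 := hu.2.2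
      have e2 := hu'.2.2
      omega
  -- the cardinality chain
  have hcard1 : (univ.filter P).card
      ≤ Nat.card (((Fin k0 ⊕ Fin k1 ⊕ Fin m) → F4) ⧸ D) := by
    have h := Finset.card_le_card_of_injOn
      (fun v => Submodule.Quotient.mk (p := D) v)
      (fun a _ => Finset.mem_univ _) hinj
    rwa [Finset.card_univ, ← Nat.card_eq_fintype_card] at h
  have hcard2 : Nat.card (((Fin k0 ⊕ Fin k1 ⊕ Fin m) → F4) ⧸ D)
      ≤ 2 ^ (Fintype.card (Fin k0 ⊕ Fin k0 ⊕ Fin k1)) :=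
    card_quot_le g C hC
  -- counting
  have hcount := count_aux k1 m ((d - 1) / 2) ω hω0
  have hbij : (univ.filter fun p : (Fin k1 → F4) × (Fin m → F4) =>
      (∀ i, p.1 i = 0 ∨ p.1 i = ω) ∧ hWt p.1 + hWt p.2 ≤ (d - 1) / 2).card
      = (univ.filter P).card := by
    apply Finset.card_nbij'
      (i := fun p => Sum.elim (0 : Fin k0 → F4) (Sum.elim p.1 p.2))
      (j := fun v => (fun i => v (Sum.inr (Sum.inl i)), fun i => v (Sum.inr (Sum.inr i))))
    · intro p hp
      simp only [mem_coe, mem_filter, mem_univ, true_and] at hp ⊢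
      rw [hP]
      refine ⟨fun i => rfl, fun i => hp.1 i, ?_⟩
      rw [hsplit0 _ (fun i => rfl)]
      exact hp.2
    · intro v hv
      simp only [mem_coe, mem_filter, mem_univ, true_and, hP] at hv ⊢
      refine ⟨fun i => hv.2.1 i, ?_⟩
      rw [← hsplit0 v hv.1]
      exact hv.2.2
    · intro p hp
      rfl
    · intro v hv
      simp only [mem_coe, mem_filter, mem_univ, true_and, hP] at hv
      funext x
      rcases x with i | i | i
      · exact (hv.1 i).symm
      · rfl
      · rfl
  -- put everything together
  have hρ : Fintype.card (Fin k0 ⊕ Fin k0 ⊕ Fin k1) = 2 * k0 + k1 := by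
    simp only [Fintype.card_sum, Fintype.card_fin]
    omega
  calc ∑ i ∈ Finset.range ((d - 1) / 2 + 1), ∑ j ∈ Finset.range (i + 1),
      Nat.choose k1 j * 3 ^ (i - j) * Nat.choose m (i - j)
      = (univ.filter fun p : (Fin k1 → F4) × (Fin m → F4) =>
          (∀ i, p.1 i = 0 ∨ p.1 i = ω) ∧ hWt p.1 + hWt p.2 ≤ (d - 1) / 2).card := hcount
    _ = (univ.filter P).card := hbij
    _ ≤ Nat.card (((Fin k0 ⊕ Fin k1 ⊕ Fin m) → F4) ⧸ D) := hcard1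
    _ ≤ 2 ^ (Fintype.card (Fin k0 ⊕ Fin k0 ⊕ Fin k1)) := hcard2
    _ ≤ 2 ^ (2 * k0 + 3 * k1) := by
        rw [hρ]
        exact Nat.pow_le_pow_right (by norm_num) (by omega)
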